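/- For any finite directed graph G with minimal fibration base B, the input tree of any node u of G is isomorphic to the input tree of its fiber [u] in B; consequently, G and B have the same multiset of input-tree isomorphism types. -/

import Mathlib

/-- A finite directed multigraph: a node type, an edge type, and source/target maps. -/
structure FinDigraph where
  V : Type
  E : Type
  [finV : Finite V]
  [finE : Finite E]
  src : E → V
  tgt : E → V

attribute [instance] FinDigraph.finV FinDigraph.finE

namespace FinDigraph

/-- The far endpoint of a (reversed) path ending at `u`: the list `[e_k, …, e_1]`
represents the directed path `src e_k → ⋯ → tgt e_1 = u`. -/
def farEnd (G : FinDigraph) (u : G.V) : List G.E → G.V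
  | [] => u
  | e :: _ => G.src e

/-- `l = [e_k, …, e_1]` is a directed path of `G` ending at `u`. -/
def IsInPath (G : FinDigraph) (u : G.V) : List G.E → Prop
  | [] => True
  | e :: es => IsInPath G u es ∧ G.tgt e = G.farEnd u es

/-- The nodes of the input tree of `u`: all directed paths ending at `u`. -/
def InPath (G : FinDigraph) (u : G.V) : Type := {l : List G.E // G.IsInPath u l}

/-- The root of the input tree of `u` (the empty path). -/
def root (G : FinDigraph) (u : G.V) : G.InPath u := ⟨[], trivial⟩

/-- The parent of a path in the input tree (drop the farthest edge); the root is its own parent. -/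
def parent (G : FinDigraph) (u : G.V) : G.InPath u → G.InPath u
  | ⟨[], h⟩ => ⟨[], h⟩
  | ⟨_ :: es, h⟩ => ⟨es, h.1⟩

/-- Isomorphism of input trees: a bijection of paths preserving root, depth and parent. -/
def InTreeIso (G : FinDigraph) (u : G.V) (H : FinDigraph) (v : H.V) : Prop :=
  ∃ F : G.InPath u ≃ H.InPath v,
    F (G.root u) = H.root v ∧
    (∀ p, ((F p).1).length = (p.1).length) ∧
    (∀ p, F (G.parent u p) = H.parent v (F p))

/-- The reverse graph (all edges flipped). -/
def rev (G : FinDigraph) : FinDigraph :=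
  { V := G.V, E := G.E, src := G.tgt, tgt := G.src }

/-- Isomorphism of output trees = isomorphism of input trees in the reverse graphs. -/
def OutTreeIso (G : FinDigraph) (u : G.V) (H : FinDigraph) (v : H.V) : Prop :=
  InTreeIso (rev G) u (rev H) v

/-- A homomorphism of directed multigraphs. -/
structure Hom (G H : FinDigraph) where
  onV : G.V → H.V
  onE : G.E → H.E
  map_src : ∀ e, H.src (onE e) = onV (G.src e)
  map_tgt : ∀ e, H.tgt (onE e) = onV (G.tgt e)

/-- Isomorphism of directed multigraphs. -/
def IsIso (G H : FinDigraph) : Prop :=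
  ∃ φ : Hom G H, Function.Bijective φ.onV ∧ Function.Bijective φ.onE

/-- Fibration equivalence of nodes: isomorphic input trees. -/
def fibEquiv (G : FinDigraph) (u v : G.V) : Prop := InTreeIso G u G v

/-- Covering equivalence of nodes: isomorphic input trees and isomorphic output trees. -/
def covEquiv (G : FinDigraph) (u v : G.V) : Prop :=
  InTreeIso G u G v ∧ OutTreeIso G u G v

/-- Orbit equivalence: some automorphism maps one node to the other. -/
def orbitEquiv (G : FinDigraph) (u v : G.V) : Prop :=
  ∃ φ : Hom G G, Function.Bijective φ.onV ∧ Function.Bijective φ.onE ∧ φ.onV u = v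

theorem inTreeIso_refl (G : FinDigraph) (u : G.V) : InTreeIso G u G u :=
  ⟨Equiv.refl _, rfl, fun _ => rfl, fun _ => rfl⟩

theorem inTreeIso_symm {G : FinDigraph} {u : G.V} {H : FinDigraph} {v : H.V}
    (h : InTreeIso G u H v) : InTreeIso H v G u := by
  obtain ⟨F, hroot, hlen, hpar⟩ := h
  refine ⟨F.symm, ?_, ?_, ?_⟩
  · rw [← hroot, Equiv.symm_apply_apply]
  · intro p; rw [← hlen (F.symm p), Equiv.apply_symm_apply]
  · intro p
    apply F.injective
    rw [Equiv.apply_symm_apply, hpar (F.symm p), Equiv.apply_symm_apply]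

theorem inTreeIso_trans {G : FinDigraph} {u : G.V} {H : FinDigraph} {v : H.V}
    {K : FinDigraph} {w : K.V}
    (h₁ : InTreeIso G u H v) (h₂ : InTreeIso H v K w) : InTreeIso G u K w := by
  obtain ⟨F, fr, fl, fp⟩ := h₁
  obtain ⟨F', gr, gl, gp⟩ := h₂
  refine ⟨F.trans F', ?_, ?_, ?_⟩
  · simp [Equiv.trans_apply, fr, gr]
  · intro p; simp [Equiv.trans_apply, gl, fl]
  · intro p; simp [Equiv.trans_apply, fp, gp]

/-- The setoid of fibration equivalence (isomorphism of input trees). -/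
def fibSetoid (G : FinDigraph) : Setoid G.V :=
  ⟨fibEquiv G, ⟨fun u => inTreeIso_refl G u, inTreeIso_symm, inTreeIso_trans⟩⟩

/-- The minimal fibration base of `G`: nodes are the fibers (input-tree isomorphism
classes), and the edges from a fiber `C'` into a fiber `C` are the edges of `G` from
nodes of `C'` into the chosen representative of `C`. -/
def base (G : FinDigraph) : FinDigraph where
  V := Quotient (fibSetoid G)
  E := {e : G.E // G.tgt e = (Quotient.mk (fibSetoid G) (G.tgt e)).out}
  src e := Quotient.mk (fibSetoid G) (G.src e.1)
  tgt e := Quotient.mk (fibSetoid G) (G.tgt e.1)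

/-- The fiber of a node, as a node of the minimal base. -/
def fibClass (G : FinDigraph) (u : G.V) : (base G).V := Quotient.mk (fibSetoid G) u

/-- A partition (given as an equivalence relation) is balanced if any two equivalent
nodes receive the same number of edges from each class. -/
def IsBalanced (G : FinDigraph) (r : G.V → G.V → Prop) : Prop :=
  Equivalence r ∧ ∀ u v, r u v → ∀ w : G.V,
    Nat.card {e : G.E // G.tgt e = u ∧ r (G.src e) w} =
    Nat.card {e : G.E // G.tgt e = v ∧ r (G.src e) w}

/-- The multiset of states of the in-neighbors of `u` (with edge multiplicity). -/
noncomputable def inStates (G : FinDigraph) {S : Type} (x : G.V → S) (u : G.V) :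
    Multiset S :=
  letI := Fintype.ofFinite G.E
  letI := Classical.decEq G.V
  (Finset.univ.filter (fun e => G.tgt e = u)).val.map fun e => x (G.src e)

end FinDigraph


/-!
A fibration `φ : G → H` (a graph homomorphism that is bijective on the in-edges of every node)
lifts paths uniquely, so `l ↦ l.map φ.onE` is an isomorphism from the input tree of `u` onto
that of `φ u`. It remains to see that the quotient map `G → base G` is a fibration, i.e. that
nodes `u, v` with isomorphic input trees have in-edges matched by a bijection `σ` for which
`src e` and `src (σ e)` again have isomorphic input trees. A tree isomorphism sends the
depth-one path `[e]` to some `[e']`, and the subtree of paths ending in `e` onto the subtree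
of paths ending in `e'`; these subtrees are the input trees of `src e` and `src e'`.
-/

namespace FinDigraph

variable {G H : FinDigraph} {u : G.V} {v : H.V}

theorem isInPath_append_singleton {l : List G.E} {e : G.E} :
    G.IsInPath u (l ++ [e]) ↔ G.tgt e = u ∧ G.IsInPath (G.src e) l := by
  induction l with
  | nil => simp [IsInPath, farEnd, and_comm]
  | cons a l ih =>
    have hfar : G.farEnd u (l ++ [e]) = G.farEnd (G.src e) l := by cases l <;> rfl
    simp [IsInPath, ih, hfar, and_assoc]

theorem parent_val (p : G.InPath u) : (G.parent u p).1 = p.1.tail := by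
  obtain ⟨l, h⟩ := p
  cases l <;> rfl

theorem parent_iterate_val (p : G.InPath u) (k : ℕ) :
    ((G.parent u)^[k] p).1 = p.1.drop k := by
  induction k generalizing p with
  | zero => rfl
  | succ k ih =>
    rw [Function.iterate_succ_apply, ih, parent_val, ← List.drop_one, List.drop_drop,
      Nat.add_comm]

theorem InPath.ext_iff {p q : G.InPath u} : p = q ↔ p.1 = q.1 :=
  Subtype.ext_iff

theorem eq_root_of_length_eq_zero {p : G.InPath u} (h : p.1.length = 0) : p = G.root u :=
  Subtype.ext (List.length_eq_zero_iff.mp h)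

theorem inTreeIso_of_equiv (F : G.InPath u ≃ H.InPath v)
    (hlen : ∀ p, (F p).1.length = p.1.length)
    (hpar : ∀ p, p.1 ≠ [] → F (G.parent u p) = H.parent v (F p)) :
    InTreeIso G u H v := by
  have hroot : F (G.root u) = H.root v := eq_root_of_length_eq_zero (hlen _)
  refine ⟨F, hroot, hlen, fun p => ?_⟩
  by_cases hp : p.1 = []
  · rw [eq_root_of_length_eq_zero (List.length_eq_zero_iff.mpr hp)]
    change F (G.root u) = H.parent v (F (G.root u))
    rw [hroot]
    rfl
  · exact hpar p hp

def single (e : G.E) (he : G.tgt e = u) : G.InPath u := ⟨[e], trivial, he⟩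

def extend (e : G.E) (he : G.tgt e = u) (p : G.InPath (G.src e)) : G.InPath u :=
  ⟨p.1 ++ [e], isInPath_append_singleton.mpr ⟨he, p.2⟩⟩

section Extend

variable {e : G.E} (he : G.tgt e = u)

theorem extend_injective : Function.Injective (extend e he) :=
  fun _ _ h => Subtype.ext (List.append_cancel_right (congrArg Subtype.val h))

theorem length_extend (p : G.InPath (G.src e)) :
    (extend e he p).1.length = p.1.length + 1 :=
  List.length_append

theorem parent_extend {p : G.InPath (G.src e)} (hp : p.1 ≠ []) :
    G.parent u (extend e he p) = extend e he (G.parent (G.src e) p) := by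
  obtain ⟨l, h⟩ := p
  cases l with
  | nil => exact absurd rfl hp
  | cons a l => rfl

theorem mem_range_extend_iff (q : G.InPath u) :
    q ∈ Set.range (extend e he) ↔ q.1.getLast? = some e := by
  constructor
  · rintro ⟨p, rfl⟩
    simp [extend]
  · intro h
    obtain ⟨l, hl⟩ := List.getLast?_eq_some_iff.mp h
    have hq := q.2
    rw [hl, isInPath_append_singleton] at hq
    exact ⟨⟨l, hq.2⟩, Subtype.ext hl.symm⟩

theorem getLast?_eq_some_iff_parent_iterate (q : G.InPath u) :
    q.1.getLast? = some e ↔ (G.parent u)^[q.1.length - 1] q = single e he := by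
  rw [InPath.ext_iff, parent_iterate_val]
  change _ ↔ _ = [e]
  rcases List.eq_nil_or_concat q.1 with h | ⟨l, a, h⟩ <;> simp [h]

end Extend

section TreeIso

variable (F : G.InPath u ≃ H.InPath v) (hlen : ∀ p, (F p).1.length = p.1.length)
  (hpar : Function.Semiconj F (G.parent u) (H.parent v))
  {e : G.E} {e' : H.E} (he : G.tgt e = u) (he' : H.tgt e' = v)

include hlen hpar in
theorem getLast?_apply_eq_some_iff (hF : F (single e he) = single e' he') (q : G.InPath u) :
    (F q).1.getLast? = some e' ↔ q.1.getLast? = some e := by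
  rw [getLast?_eq_some_iff_parent_iterate he, getLast?_eq_some_iff_parent_iterate he', hlen,
    ← (hpar.iterate_right _).eq, ← hF, F.apply_eq_iff_eq]

include hlen hpar in
theorem inTreeIso_src_of_apply_single (hF : F (single e he) = single e' he') :
    InTreeIso G (G.src e) H (H.src e') := by
  let Φ : G.InPath (G.src e) ≃ H.InPath (H.src e') :=
    (Equiv.ofInjective _ (extend_injective he)).trans <|
      (F.subtypeEquiv fun q => by
          rw [mem_range_extend_iff, mem_range_extend_iff,
            getLast?_apply_eq_some_iff F hlen hpar he he' hF]).trans
        (Equiv.ofInjective _ (extend_injective he')).symm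
  have hΦ (p) : extend e' he' (Φ p) = F (extend e he p) :=
    Equiv.apply_ofInjective_symm (extend_injective he') _
  have hlenΦ (p) : (Φ p).1.length = p.1.length := by
    have := congrArg (·.1.length) (hΦ p)
    simp only [length_extend, hlen] at this
    omega
  refine inTreeIso_of_equiv Φ hlenΦ fun p hp => extend_injective he' ?_
  have hΦp : (Φ p).1 ≠ [] := by
    rwa [← List.length_pos_iff, hlenΦ, List.length_pos_iff]
  rw [hΦ, ← parent_extend he hp, hpar.eq, ← hΦ, parent_extend he' hΦp]

end TreeIso

noncomputable def singleEquiv (u : G.V) :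
    {e : G.E // G.tgt e = u} ≃ {p : G.InPath u // p.1.length = 1} :=
  Equiv.ofBijective (fun e => ⟨single e.1 e.2, rfl⟩) <| by
    refine ⟨fun e₁ e₂ h => Subtype.ext ?_, fun ⟨⟨l, hl⟩, hlen⟩ => ?_⟩
    · exact List.singleton_injective (congrArg (fun p => p.1.1) h)
    · obtain ⟨a, rfl⟩ := List.length_eq_one_iff.mp hlen
      exact ⟨⟨a, hl.2⟩, rfl⟩

theorem InTreeIso.exists_inEdgeEquiv (h : InTreeIso G u H v) :
    ∃ σ : {e : G.E // G.tgt e = u} ≃ {e : H.E // H.tgt e = v},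
      ∀ e, InTreeIso G (G.src e.1) H (H.src (σ e).1) := by
  obtain ⟨F, -, hlen, hpar⟩ := h
  let σ := (singleEquiv u).trans
    ((F.subtypeEquiv fun p => by rw [hlen]).trans (singleEquiv v).symm)
  refine ⟨σ, fun e => inTreeIso_src_of_apply_single F hlen hpar e.2 (σ e).2 ?_⟩
  exact (congrArg Subtype.val
    ((singleEquiv v).apply_symm_apply ⟨F (single e.1 e.2), hlen _⟩)).symm

namespace Hom

variable (φ : Hom G H)

def IsFibration : Prop :=
  ∀ (v : G.V) (f : H.E), H.tgt f = φ.onV v → ∃! e : G.E, G.tgt e = v ∧ φ.onE e = f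

theorem farEnd_map (u : G.V) (l : List G.E) :
    H.farEnd (φ.onV u) (l.map φ.onE) = φ.onV (G.farEnd u l) := by
  cases l with
  | nil => rfl
  | cons e l => exact φ.map_src e

theorem isInPath_map {l : List G.E} (h : G.IsInPath u l) :
    H.IsInPath (φ.onV u) (l.map φ.onE) := by
  induction l with
  | nil => trivial
  | cons e l ih => exact ⟨ih h.1, by rw [φ.map_tgt, h.2, farEnd_map]⟩

def mapInPath (u : G.V) (p : G.InPath u) : H.InPath (φ.onV u) :=
  ⟨p.1.map φ.onE, φ.isInPath_map p.2⟩

variable {φ}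

theorem IsFibration.map_inj_of_isInPath (hφ : φ.IsFibration) {l₁ l₂ : List G.E}
    (h₁ : G.IsInPath u l₁) (h₂ : G.IsInPath u l₂) (h : l₁.map φ.onE = l₂.map φ.onE) :
    l₁ = l₂ := by
  induction l₁ generalizing l₂ with
  | nil => exact (List.map_eq_nil_iff.mp h.symm).symm
  | cons e₁ l₁ ih =>
    cases l₂ with
    | nil => simp at h
    | cons e₂ l₂ =>
      obtain ⟨he, hl⟩ := List.cons.inj h
      obtain rfl := ih h₁.1 h₂.1 hl
      have hlift := hφ (G.farEnd u l₁) (φ.onE e₁) (by rw [φ.map_tgt, h₁.2])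
      rw [hlift.unique ⟨h₁.2, rfl⟩ ⟨h₂.2, he.symm⟩]

theorem IsFibration.exists_map_eq (hφ : φ.IsFibration) {m : List H.E}
    (hm : H.IsInPath (φ.onV u) m) : ∃ l, G.IsInPath u l ∧ l.map φ.onE = m := by
  induction m with
  | nil => exact ⟨[], trivial, rfl⟩
  | cons f m ih =>
    obtain ⟨l, hl, rfl⟩ := ih hm.1
    obtain ⟨e, ⟨he, rfl⟩, -⟩ := hφ (G.farEnd u l) f (by rw [hm.2, farEnd_map])
    exact ⟨e :: l, ⟨hl, he⟩, rfl⟩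

theorem IsFibration.inTreeIso (hφ : φ.IsFibration) (u : G.V) : InTreeIso G u H (φ.onV u) := by
  have hbij : Function.Bijective (φ.mapInPath u) := by
    refine ⟨fun p q h => Subtype.ext (hφ.map_inj_of_isInPath p.2 q.2 (congrArg Subtype.val h)),
      fun q => ?_⟩
    obtain ⟨l, hl, hmap⟩ := hφ.exists_map_eq q.2
    exact ⟨⟨l, hl⟩, Subtype.ext hmap⟩
  refine inTreeIso_of_equiv (Equiv.ofBijective _ hbij) (fun p => List.length_map _)
    fun p _ => Subtype.ext ?_
  change (G.parent u p).1.map φ.onE = (H.parent _ (φ.mapInPath u p)).1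
  rw [parent_val, parent_val]
  exact List.map_tail

end Hom

theorem exists_isFibration_base (G : FinDigraph) :
    ∃ φ : Hom G (base G), φ.IsFibration ∧ φ.onV = G.fibClass := by
  -- The edges of `base G` into `[w]` are the edges of `G` into the representative `[w].out`;
  -- `σ w` matches them with the in-edges of `w`, preserving the fibers of the sources.
  choose σ hσ using fun w : G.V =>
    InTreeIso.exists_inEdgeEquiv (inTreeIso_symm (Quotient.mk_out (s := G.fibSetoid) w))
  have hσ_tgt (w : G.V) (e : {e : G.E // G.tgt e = w}) :
      G.fibClass (G.tgt (σ w e).1) = G.fibClass w := by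
    rw [(σ w e).2]
    exact Quotient.out_eq _
  let φ : Hom G (base G) :=
    { onV := G.fibClass
      onE := fun e => ⟨(σ (G.tgt e) ⟨e, rfl⟩).1, by
        rw [(σ _ _).2, Quotient.out_eq]⟩
      map_src := fun e => (Quotient.sound (hσ _ ⟨e, rfl⟩)).symm
      map_tgt := fun e => hσ_tgt _ ⟨e, rfl⟩ }
  refine ⟨φ, fun v f hf => ?_, rfl⟩
  have hf' : G.tgt f.1 = (G.fibClass v).out := f.2.trans (congrArg Quotient.out hf)
  have honE (e : {e : G.E // G.tgt e = v}) : (φ.onE e.1).1 = (σ v e).1 := by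
    obtain ⟨e, rfl⟩ := e
    rfl
  refine ⟨((σ v).symm ⟨f.1, hf'⟩).1, ⟨((σ v).symm _).2, ?_⟩, ?_⟩
  · exact Subtype.ext ((honE _).trans (by rw [Equiv.apply_symm_apply]))
  · rintro e ⟨rfl, he⟩
    have hσe : σ _ ⟨e, rfl⟩ = ⟨f.1, hf'⟩ :=
      Subtype.ext ((honE ⟨e, rfl⟩).symm.trans (congrArg (fun f : (base G).E => f.1) he))
    exact congrArg Subtype.val ((Equiv.eq_symm_apply _).mpr hσe)

end FinDigraph

/-- the input tree of every node `u` of `G` is isomorphic to the input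
tree of its fiber `[u]` in the minimal base `B`; consequently `G` and `B` realize the
same input-tree isomorphism types. -/
theorem inTree_of_base (G : FinDigraph) :
    (∀ u : G.V, FinDigraph.InTreeIso G u (FinDigraph.base G) (FinDigraph.fibClass G u)) ∧
    (∀ b : (FinDigraph.base G).V,
      ∃ u : G.V, FinDigraph.InTreeIso G u (FinDigraph.base G) b) := by
  obtain ⟨φ, hφ, hV⟩ := FinDigraph.exists_isFibration_base G
  have h (u : G.V) : FinDigraph.InTreeIso G u (FinDigraph.base G) (FinDigraph.fibClass G u) :=
    hV ▸ hφ.inTreeIso u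
  exact ⟨h, fun b => Quotient.inductionOn b fun u => ⟨u, h u⟩⟩
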